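/- Let d ≥ 1, let g = χ_{[−1/2,1/2]} be the indicator function of [−1/2,1/2] ⊂ ℝ, and let Γ ⊂ S^{d−1} × ℝ be such that the map (u,m) ↦ mu is a bijection from Γ onto ℤ^d. Set Λ = {(m,n,u) : (u,m) ∈ Γ, n ∈ ℤ}. Then for every f ∈ L²(ℝ^d) with support contained in the ball B_{1/2}(0), Σ_{(m,n,u)∈Λ} |⟨f, g_{m,n,u}⟩|² = ‖f‖₂²; i.e., the system {g_{m,n,u}}_{(m,n,u)∈Λ} is a Parseval frame for this subspace of L²(ℝ^d). -/

import Mathlib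

open MeasureTheory Real Complex

noncomputable section

/-- The directional Gabor coefficient `⟨f, g_{m,n,u}⟩`. -/
def gaborCoef {d : ℕ} (f : EuclideanSpace ℝ (Fin d) → ℂ) (g : ℝ → ℂ)
    (m n : ℝ) (u : EuclideanSpace ℝ (Fin d)) : ℂ :=
  ∫ x : EuclideanSpace ℝ (Fin d),
    f x * Complex.exp ((-(2 * Real.pi * m * (inner ℝ u x : ℝ)) : ℝ) * Complex.I) *
      (starRingEnd ℂ) (g ((inner ℝ u x : ℝ) - n))

/-- The subset of `ℝ^d` consisting of points with integer coordinates, i.e. `ℤ^d ⊂ ℝ^d`. -/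
def intLattice (d : ℕ) : Set (EuclideanSpace ℝ (Fin d)) :=
  {x | ∀ i, ∃ k : ℤ, x i = (k : ℝ)}

/-!
For `f` supported in `B_{1/2}(0)` and `‖u‖ = 1` we have `|u·x| < 1/2` on the support, so the window
`g(u·x − n)` is `1` there when `n = 0` and `0` when `n ≠ 0`. Hence `⟨f, g_{m,n,u}⟩ = δ_{n0} 𝓕f(mu)`,
and after reindexing by `Γ ≃ ℤ^d` the sum becomes `∑_{k ∈ ℤ^d} |𝓕f(k)|²`. Since the support of `f`
lies in a fundamental cube of `ℤ^d`, `f` is a function on the torus `ℝ^d/ℤ^d` whose Fourier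
coefficients are the `𝓕f(k)`, and the identity is Parseval's on the torus.
-/

open Set UnitAddTorus
open scoped FourierTransform RealInnerProductSpace

namespace UnitAddTorus

/- Mathlib's Fourier theory on the torus is stated for the Haar probability measure, which is not
definitionally the default `volume` on `AddCircle 1`. -/
local instance : MeasureSpace UnitAddCircle := ⟨AddCircle.haarAddCircle⟩

variable {ι E : Type*}

lemma mFourier_coe_apply [Fintype ι] (n : ι → ℤ) (x : ι → ℝ) :
    mFourier n (fun i => (x i : UnitAddCircle)) = 𝐞 (∑ i, (n i : ℝ) * x i) := by
  simp only [mFourier, ContinuousMap.coe_mk, fourier_coe_apply, Real.fourierChar_apply,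
    ← Complex.exp_sum]
  push_cast
  rw [Finset.mul_sum, Finset.sum_mul]
  exact congrArg _ (Finset.sum_congr rfl fun i _ => by ring)

/-- The function on the torus that agrees with `g` on the fundamental domain
`∏ i, (a i, a i + 1]`. -/
def liftOfCube (a : ι → ℝ) (g : (ι → ℝ) → E) : UnitAddTorus ι → E :=
  fun y => g (measurableEquivPiIoc a y)

variable {a : ι → ℝ} {g : (ι → ℝ) → E}

lemma liftOfCube_coe {x : ι → ℝ} (hx : ∀ i, x i ∈ Ioc (a i) (a i + 1)) :
    liftOfCube a g (fun i => x i) = g x := by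
  rw [liftOfCube, ← coe_symm_measurableEquivPiIoc_apply a ⟨x, hx⟩, MeasurableEquiv.apply_symm_apply]

variable [Fintype ι] [NormedAddCommGroup E]

lemma memLp_liftOfCube {p : ENNReal} (hg : MemLp g p) : MemLp (liftOfCube a g) p :=
  hg.restrict _ |>.comp_measurePreserving <|
    (measurePreserving_subtype_coe (MeasurableSet.univ_pi' fun _ => measurableSet_Ioc)).comp
      (measurePreserving_equivPiIoc a)

section

variable (hg : Function.support g ⊆ {x | ∀ i, x i ∈ Ioc (a i) (a i + 1)})
include hg

lemma integral_liftOfCube [NormedSpace ℝ E] : ∫ y, liftOfCube a g y = ∫ x, g x := by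
  rw [integral_preimage _ a, ← setIntegral_eq_integral_of_forall_compl_eq_zero (f := g)
    fun x hx => Function.notMem_support.mp fun h => hx (hg h)]
  exact setIntegral_congr_fun (MeasurableSet.univ_pi' fun _ => measurableSet_Ioc) fun x hx =>
    liftOfCube_coe hx

lemma mFourierCoeff_liftOfCube [NormedSpace ℂ E] (n : ι → ℤ) :
    mFourierCoeff (liftOfCube a g) n = ∫ x, 𝐞 (-∑ i, (n i : ℝ) * x i) • g x := by
  rw [mFourierCoeff_eq_integral _ _ a, ← setIntegral_eq_integral_of_forall_compl_eq_zero
    (f := fun x => 𝐞 (-∑ i, (n i : ℝ) * x i) • g x) fun x hx => by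
      rw [Function.notMem_support.mp fun h => hx (hg h), smul_zero]]
  refine setIntegral_congr_fun (MeasurableSet.univ_pi' fun _ => measurableSet_Ioc) fun x hx => ?_
  simp only [liftOfCube_coe hx, mFourier_coe_apply, Pi.neg_apply, Int.cast_neg, neg_mul,
    Finset.sum_neg_distrib, Circle.smul_def]

end

theorem hasSum_sq_norm_integral_fourierChar_of_support_subset {g : (ι → ℝ) → ℂ}
    (hg : Function.support g ⊆ {x | ∀ i, x i ∈ Ioc (a i) (a i + 1)}) (hg2 : MemLp g 2) :
    HasSum (fun n : ι → ℤ => ‖∫ x, 𝐞 (-∑ i, (n i : ℝ) * x i) • g x‖ ^ 2) (∫ x, ‖g x‖ ^ 2) := by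
  set G := (memLp_liftOfCube (a := a) hg2).toLp
  have hG : G =ᵐ[volume] liftOfCube a g := MemLp.coeFn_toLp _
  have hcoeff : ∀ n, mFourierCoeff G n = mFourierCoeff (liftOfCube a g) n := fun n =>
    integral_congr_ae (hG.mono fun y hy => by simp only [hy])
  have hnorm : ∫ y, ‖G y‖ ^ 2 = ∫ x, ‖g x‖ ^ 2 :=
    (integral_congr_ae (hG.mono fun y hy => by rw [hy]; rfl)).trans
      (integral_liftOfCube (a := a) (g := fun x => ‖g x‖ ^ 2) (by simpa using hg))
  simpa only [hcoeff, mFourierCoeff_liftOfCube hg, hnorm] using hasSum_sq_mFourierCoeff G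

end UnitAddTorus

theorem hasSum_sq_norm_fourier_intCast_of_support_subset {ι : Type*} [Fintype ι] {a : ι → ℝ}
    {f : EuclideanSpace ℝ ι → ℂ} (hf : Function.support f ⊆ {x | ∀ i, x i ∈ Ioc (a i) (a i + 1)})
    (hf2 : MemLp f 2) :
    HasSum (fun n : ι → ℤ => ‖𝓕 f (WithLp.toLp 2 fun i => (n i : ℝ))‖ ^ 2) (∫ x, ‖f x‖ ^ 2) := by
  have htoLp : MeasurePreserving (MeasurableEquiv.toLp 2 (ι → ℝ)) :=
    PiLp.volume_preserving_toLp ι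
  have hfourier : ∀ n : ι → ℤ, 𝓕 f (WithLp.toLp 2 fun i => (n i : ℝ))
      = ∫ x, 𝐞 (-∑ i, (n i : ℝ) * x i) • f (WithLp.toLp 2 x) := by
    intro n
    rw [Real.fourier_eq, ← htoLp.integral_comp']
    simp [PiLp.inner_apply]
  have hnorm : ∫ x, ‖f x‖ ^ 2 = ∫ x, ‖f (WithLp.toLp 2 x)‖ ^ 2 :=
    (htoLp.integral_comp' fun y => ‖f y‖ ^ 2).symm
  simp only [hfourier, hnorm]
  exact hasSum_sq_norm_integral_fourierChar_of_support_subset (fun _ hx => hf hx)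
    (hf2.comp_measurePreserving htoLp)

lemma EuclideanSpace.ball_zero_half_subset_cube {ι : Type*} [Fintype ι] :
    Metric.ball (0 : EuclideanSpace ℝ ι) (1 / 2) ⊆
      {x | ∀ i, x i ∈ Ioc (-(1 / 2)) (-(1 / 2) + 1)} := by
  intro x hx i
  have hxi : |x i| < 1 / 2 := (PiLp.norm_apply_le x i).trans_lt (mem_ball_zero_iff.mp hx)
  constructor <;> linarith [abs_lt.mp hxi]

lemma indicator_Icc_sub_intCast {t : ℝ} (ht : |t| < 1 / 2) (n : ℤ) :
    (Icc (-(1 / 2) : ℝ) (1 / 2)).indicator (fun _ => (1 : ℂ)) (t - n) = if n = 0 then 1 else 0 := by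
  obtain ⟨ht₁, ht₂⟩ := abs_lt.mp ht
  split_ifs with hn
  · rw [hn, Int.cast_zero, sub_zero]
    exact indicator_of_mem (s := Icc _ _) ⟨ht₁.le, ht₂.le⟩ _
  · have hn₁ : (1 : ℝ) ≤ |(n : ℝ)| := by exact_mod_cast Int.one_le_abs hn
    refine indicator_of_notMem (fun h => ?_) _
    rcases le_abs'.mp hn₁ with h' | h' <;> linarith [h.1, h.2]

theorem gaborCoef_indicator_Icc_of_support_subset_ball {d : ℕ} {f : EuclideanSpace ℝ (Fin d) → ℂ}
    (hf : Function.support f ⊆ Metric.ball 0 (1 / 2)) {u : EuclideanSpace ℝ (Fin d)} (hu : ‖u‖ ≤ 1)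
    (m : ℝ) (n : ℤ) :
    gaborCoef f ((Icc (-(1 / 2) : ℝ) (1 / 2)).indicator fun _ => 1) m n u
      = if n = 0 then 𝓕 f (m • u) else 0 := by
  have hpoint : ∀ x, f x * Complex.exp ((-(2 * π * m * ⟪u, x⟫) : ℝ) * I) *
      (starRingEnd ℂ) ((Icc (-(1 / 2) : ℝ) (1 / 2)).indicator (fun _ => 1) (⟪u, x⟫ - n))
        = if n = 0 then 𝐞 (-⟪x, m • u⟫) • f x else 0 := by
    intro x
    by_cases hx : f x = 0
    · simp [hx]
    have hux : |⟪u, x⟫| < 1 / 2 := calc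
      |⟪u, x⟫| ≤ ‖u‖ * ‖x‖ := abs_real_inner_le_norm u x
      _ ≤ ‖x‖ := mul_le_of_le_one_left (norm_nonneg x) hu
      _ < 1 / 2 := mem_ball_zero_iff.mp (hf hx)
    rw [indicator_Icc_sub_intCast hux]
    split_ifs
    · simp only [map_one, mul_one, Circle.smul_def, Real.fourierChar_apply, smul_eq_mul,
        real_inner_smul_right, real_inner_comm]
      ring_nf
    · simp
  rw [gaborCoef, integral_congr_ae (ae_of_all _ hpoint)]
  split_ifs <;> simp [Real.fourier_eq]

def intLatticeEquiv (d : ℕ) : (Fin d → ℤ) ≃ intLattice d :=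
  Equiv.ofBijective (fun n => ⟨WithLp.toLp 2 fun i => (n i : ℝ), fun i => ⟨n i, rfl⟩⟩)
    ⟨fun n n' h => funext fun i => by
      simpa using congrArg (fun x : intLattice d => (x : EuclideanSpace ℝ (Fin d)) i) h,
     fun ⟨x, hx⟩ => by
      obtain ⟨n, hn⟩ := Classical.skolem.mp hx
      exact ⟨n, Subtype.ext <| PiLp.ext fun i => (hn i).symm⟩⟩

theorem indicator_directional_gabor_parseval_general {d : ℕ}
    (Γ : Set (EuclideanSpace ℝ (Fin d) × ℝ))
    (hΓsphere : ∀ p ∈ Γ, ‖p.1‖ = 1)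
    (hΓbij : Set.BijOn (fun p : EuclideanSpace ℝ (Fin d) × ℝ => p.2 • p.1) Γ (intLattice d))
    (f : EuclideanSpace ℝ (Fin d) → ℂ) (hf2 : MemLp f 2 volume)
    (hsupp : Function.support f ⊆ Metric.ball (0 : EuclideanSpace ℝ (Fin d)) (1 / 2)) :
    (∑' p : Γ, ∑' n : ℤ,
        ‖gaborCoef f (Set.indicator (Set.Icc (-(1 / 2) : ℝ) (1 / 2)) fun _ => (1 : ℂ))
          (p : EuclideanSpace ℝ (Fin d) × ℝ).2 (n : ℝ)
          (p : EuclideanSpace ℝ (Fin d) × ℝ).1‖ ^ 2)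
      = ∫ x : EuclideanSpace ℝ (Fin d), ‖f x‖ ^ 2 := by
  calc _ = ∑' p : Γ, ‖𝓕 f (p.1.2 • p.1.1)‖ ^ 2 := by
        refine tsum_congr fun p => ?_
        simp only [gaborCoef_indicator_Icc_of_support_subset_ball hsupp (hΓsphere p p.2).le,
          apply_ite (‖·‖ ^ 2), norm_zero, zero_pow two_ne_zero, tsum_ite_eq]
    _ = ∑' v : intLattice d, ‖𝓕 f v‖ ^ 2 := Equiv.tsum_eq (hΓbij.equiv _) (‖𝓕 f ·‖ ^ 2)
    _ = ∑' n : Fin d → ℤ, ‖𝓕 f (WithLp.toLp 2 fun i => (n i : ℝ))‖ ^ 2 :=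
        (Equiv.tsum_eq (intLatticeEquiv d) (‖𝓕 f ·‖ ^ 2)).symm
    _ = _ := (hasSum_sq_norm_fourier_intCast_of_support_subset
        (hsupp.trans EuclideanSpace.ball_zero_half_subset_cube) hf2).tsum_eq

/-- with `g = χ_{[−1/2,1/2]}` and `Γ ⊂ S^{d−1} × ℝ` such that `(u,m) ↦ mu`
is a bijection of `Γ` onto `ℤ^d`, the system `{g_{m,n,u}}_{(m,n,u) ∈ Λ}`,
`Λ = {(m,n,u) : (u,m) ∈ Γ, n ∈ ℤ}`, is a Parseval frame for the functions in `L²(ℝ^d)`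
supported in `B_{1/2}(0)`: `Σ_{(m,n,u)∈Λ} |⟨f, g_{m,n,u}⟩|² = ‖f‖₂²`. -/
theorem indicator_directional_gabor_parseval {d : ℕ} (hd : 1 ≤ d)
    (Γ : Set (EuclideanSpace ℝ (Fin d) × ℝ))
    (hΓsphere : ∀ p ∈ Γ, ‖p.1‖ = 1)
    (hΓbij : Set.BijOn (fun p : EuclideanSpace ℝ (Fin d) × ℝ => p.2 • p.1) Γ (intLattice d))
    (f : EuclideanSpace ℝ (Fin d) → ℂ) (hf2 : MemLp f 2 volume)
    (hsupp : Function.support f ⊆ Metric.ball (0 : EuclideanSpace ℝ (Fin d)) (1 / 2)) :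
    (∑' p : Γ, ∑' n : ℤ,
        ‖gaborCoef f (Set.indicator (Set.Icc (-(1 / 2) : ℝ) (1 / 2)) fun _ => (1 : ℂ))
          (p : EuclideanSpace ℝ (Fin d) × ℝ).2 (n : ℝ)
          (p : EuclideanSpace ℝ (Fin d) × ℝ).1‖ ^ 2)
      = ∫ x : EuclideanSpace ℝ (Fin d), ‖f x‖ ^ 2 :=
  indicator_directional_gabor_parseval_general Γ hΓsphere hΓbij f hf2 hsupp
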